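/- Let k ≥ m ≥ 1, let U ⊆ ℂ^k be an open set, and let π : ℂ^k → ℂ^m be holomorphic on U such that at every point of U the complex derivative of π : ℂ^k → ℂ^m is surjective (i.e., π is a holomorphic submersion on U); then V := π(U) is open in ℂ^m. Let g : ℂ^m → [0, ∞] be a measurable function. Then g is locally integrable on V with respect to Lebesgue measure on ℂ^m if and only if g ∘ π is locally integrable on U with respect to Lebesgue measure on ℂ^k. (This is the local coordinate content of the equality π*𝒥(φ) = 𝒥(π*φ) for multiplier ideals under a smooth morphism π : Y → X of complex manifolds.) -/

import Mathlib

open MeasureTheory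

/-- A `[0,∞]`-valued function is locally integrable on `s` if every point of `s` has a
neighborhood (within `s`) on which the (lower) integral of `g` is finite. -/
def ELocallyIntegrableOn {α : Type*} [MeasurableSpace α] [TopologicalSpace α]
    (g : α → ENNReal) (s : Set α) (μ : Measure α) : Prop :=
  ∀ x ∈ s, ∃ t ∈ nhdsWithin x s, ∫⁻ y in t, g y ∂μ < ⊤

/-!
A holomorphic map on an open subset of `ℂ^k` is `C¹`: its derivative in a direction `v` is the
derivative of its restrictions to the complex lines `w + ℂ v`, which depend locally uniformly on
`w`, so Weierstrass' theorem makes them vary continuously. Near a point `x` where `dπ(x)` is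
surjective, adjoin to `π` a linear projection `p` onto `ker dπ(x)`: then `φ = (π, p)` is a local
diffeomorphism onto a neighbourhood of `(π x, p x)`. On a small neighbourhood of `x` the Jacobian
of `φ` is bounded above and away from `0`, so by the change of variables formula `∫ g ∘ π` over
`φ⁻¹(A × B)` is finite iff `∫ g ∘ Prod.fst` over the box `A × B` is, i.e. by Tonelli iff `∫_A g`
is. Openness of `π(U)` is the open mapping part of the implicit function theorem.
-/

open Set Filter Topology Metric ENNReal

theorem DifferentiableOn.continuousOn_fderiv_of_isOpen {E F : Type*}
    [NormedAddCommGroup E] [NormedSpace ℂ E] [FiniteDimensional ℂ E]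
    [NormedAddCommGroup F] [NormedSpace ℂ F] [CompleteSpace F] {f : E → F} {U : Set E}
    (hf : DifferentiableOn ℂ f U) (hU : IsOpen U) : ContinuousOn (fderiv ℂ f) U := by
  refine continuousOn_clm_apply.2 fun v x hx => ?_
  have hline : Continuous fun p : E × ℂ => p.1 + p.2 • v := by fun_prop
  have hxU : (fun p : E × ℂ => p.1 + p.2 • v) ⁻¹' U ∈ 𝓝 (x, 0) :=
    hline.continuousAt.preimage_mem_nhds (by simpa using hU.mem_nhds hx)
  obtain ⟨⟨r, ρ⟩, ⟨hr, hρ⟩, hrρ⟩ :=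
    (nhds_basis_closedBall.prod_nhds nhds_basis_closedBall).mem_iff.1 hxU
  have hmem : ∀ w ∈ closedBall x r, ∀ t ∈ closedBall (0 : ℂ) ρ, w + t • v ∈ U :=
    fun w hw t ht => hrρ (mk_mem_prod hw ht)
  have hunif : TendstoUniformlyOn (fun w t => f (w + t • v)) (fun t => f (x + t • v)) (𝓝 x)
      (closedBall (0 : ℂ) ρ) := by
    have hcont : ContinuousOn (↿fun (w : E) (t : ℂ) => f (w + t • v))
        (closedBall x r ×ˢ closedBall 0 ρ) :=
      hf.continuousOn.comp hline.continuousOn fun p hp => hmem _ hp.1 _ hp.2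
    have := (((isCompact_closedBall x r).prod
      (isCompact_closedBall 0 ρ)).uniformContinuousOn_of_continuous hcont).tendstoUniformlyOn
        (mem_closedBall_self hr.le)
    rwa [nhdsWithin_eq_nhds.2 (closedBall_mem_nhds x hr)] at this
  have hdiff : ∀ᶠ w in 𝓝 x, DifferentiableOn ℂ (fun t : ℂ => f (w + t • v)) (ball 0 ρ) := by
    filter_upwards [closedBall_mem_nhds x hr] with w hw
    exact hf.comp (by fun_prop) fun t ht => hmem w hw t (ball_subset_closedBall ht)
  have hlim := ((hunif.tendstoLocallyUniformlyOn.mono ball_subset_closedBall).deriv hdiff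
    isOpen_ball).tendsto_at (mem_ball_self hρ)
  have hderiv : ∀ w ∈ U, _root_.deriv (fun t : ℂ => f (w + t • v)) 0 = fderiv ℂ f w v :=
    fun w hw => (hf.differentiableAt (hU.mem_nhds hw)).lineDeriv_eq_fderiv
  rw [Function.comp_def, hderiv x hx] at hlim
  exact ContinuousAt.continuousWithinAt (hlim.congr' (eventually_of_mem (hU.mem_nhds hx) hderiv))

theorem DifferentiableOn.contDiffOn_one_of_isOpen {E F : Type*}
    [NormedAddCommGroup E] [NormedSpace ℂ E] [FiniteDimensional ℂ E]
    [NormedAddCommGroup F] [NormedSpace ℂ F] [CompleteSpace F] {f : E → F} {U : Set E}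
    (hf : DifferentiableOn ℂ f U) (hU : IsOpen U) : ContDiffOn ℂ 1 f U :=
  (contDiffOn_succ_iff_fderiv_of_isOpen (n := 0) hU).2
    ⟨hf, by simp, contDiffOn_zero.2 (hf.continuousOn_fderiv_of_isOpen hU)⟩

theorem ENNReal.lt_top_iff_lt_top_of_le_mul {x y a b : ℝ≥0∞} (ha : a ≠ ∞) (hb : b ≠ ∞)
    (hx : x ≤ a * y) (hy : y ≤ b * x) : x < ∞ ↔ y < ∞ :=
  ⟨fun h => hy.trans_lt (mul_lt_top hb.lt_top h), fun h => hx.trans_lt (mul_lt_top ha.lt_top h)⟩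

theorem MeasureTheory.setLIntegral_mul_lt_top_iff {α : Type*} [MeasurableSpace α]
    {μ : Measure α} {s : Set α} (hs : MeasurableSet s) {w f : α → ℝ≥0∞} {a b : ℝ≥0∞}
    (ha : a ≠ ∞) (hb : b ≠ ∞) (hw : ∀ z ∈ s, 1 ≤ a * w z ∧ w z ≤ b) :
    ∫⁻ z in s, w z * f z ∂μ < ∞ ↔ ∫⁻ z in s, f z ∂μ < ∞ := by
  refine ENNReal.lt_top_iff_lt_top_of_le_mul hb ha ?_ ?_ <;>
    rw [← lintegral_const_mul' _ _ (by assumption)] <;>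
    refine setLIntegral_mono' hs fun z hz => ?_
  · gcongr
    exact (hw z hz).2
  · rw [← mul_assoc]
    exact le_mul_of_one_le_left' (hw z hz).1

theorem MeasureTheory.setLIntegral_prod_fst_lt_top_iff {α β : Type*} [MeasurableSpace α]
    [MeasurableSpace β] {μ : Measure α} {ν : Measure β} [SFinite μ] [SFinite ν] {g : α → ℝ≥0∞}
    (hg : Measurable g) (A : Set α) {B : Set β} (hB₀ : ν B ≠ 0) (hB : ν B ≠ ∞) :
    ∫⁻ q in A ×ˢ B, g q.1 ∂μ.prod ν < ∞ ↔ ∫⁻ y in A, g y ∂μ < ∞ := by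
  rw [setLIntegral_prod (fun q : α × β => g q.1) (hg.comp measurable_fst).aemeasurable]
  simp only [setLIntegral_const, lintegral_mul_const _ hg]
  simp [lt_top_iff_ne_top, ENNReal.mul_eq_top, hB₀, hB]

section HaarMeasure

variable {E P : Type*} [NormedAddCommGroup E] [NormedSpace ℝ E]
  [MeasurableSpace E] [BorelSpace E] (μ : Measure E) [μ.IsAddHaarMeasure]
  [NormedAddCommGroup P] [NormedSpace ℝ P] [FiniteDimensional ℝ P]
  [MeasurableSpace P] [BorelSpace P] (ν : Measure P) [ν.IsAddHaarMeasure]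

theorem ContinuousLinearEquiv.setLIntegral_comp_lt_top_iff (e : E ≃L[ℝ] P) (g : P → ℝ≥0∞)
    (t : Set P) : ∫⁻ w in e ⁻¹' t, g (e w) ∂μ < ∞ ↔ ∫⁻ y in t, g y ∂ν < ∞ := by
  let e' : E ≃ᵐ P := e.toHomeomorph.toMeasurableEquiv
  have : (μ.map e').IsAddHaarMeasure := e.isAddHaarMeasure_map μ
  set c := (μ.map e').addHaarScalarFactor ν
  have hc : c ≠ 0 := (Measure.addHaarScalarFactor_pos_of_isAddHaarMeasure _ _).ne'
  have hmap : ∫⁻ w in e ⁻¹' t, g (e w) ∂μ = c • ∫⁻ y in t, g y ∂ν := calc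
    ∫⁻ w in e ⁻¹' t, g (e w) ∂μ = ∫⁻ y in t, g y ∂(μ.map e') := by
      rw [e'.restrict_map, lintegral_map_equiv]; rfl
    _ = ∫⁻ y in t, g y ∂(c • ν) := by rw [← Measure.isAddLeftInvariant_eq_smul]
    _ = c • ∫⁻ y in t, g y ∂ν := by rw [Measure.restrict_smul, lintegral_smul_measure]
  rw [hmap, ENNReal.nnreal_smul_lt_top_iff hc]

variable [FiniteDimensional ℝ E]

theorem ContDiffAt.exists_mem_nhds_setLIntegral_comp_lt_top_iff {φ : E → P} {x : E}
    (hφ : ContDiffAt ℝ 1 φ x) (e : E ≃L[ℝ] P) (he : fderiv ℝ φ x = e) :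
    ∃ s ∈ 𝓝 x, ∀ s' ⊆ s, MeasurableSet s' → ∀ g : P → ℝ≥0∞,
      (∫⁻ z in s', g (φ z) ∂μ < ∞ ↔ ∫⁻ y in φ '' s', g y ∂ν < ∞) := by
  -- `e.symm ∘ φ` is a self-map of `E` with Jacobian `1` at `x`, to which the change of variables
  -- formula applies.
  set J : E → E →L[ℝ] E := fun z => (e.symm : P →L[ℝ] E).comp (fderiv ℝ φ z)
  set jac : E → ℝ≥0∞ := fun z => ENNReal.ofReal |(J z).det|
  have hjac : ContinuousAt jac x :=
    ENNReal.continuous_ofReal.continuousAt.comp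
      (ContinuousLinearMap.continuous_det.continuousAt.comp
        (continuousAt_const.clm_comp (hφ.continuousAt_fderiv one_ne_zero))).abs
  have hstrict : HasStrictFDerivAt φ (e : E →L[ℝ] P) x := he ▸ hφ.hasStrictFDerivAt one_ne_zero
  set φ' := hstrict.toOpenPartialHomeomorph φ
  have hjacx : jac x ∈ Ioo 2⁻¹ 2 := by simp [jac, J, he, ContinuousLinearMap.det]
  have hev : ∀ᶠ z in 𝓝 x, HasFDerivAt φ (fderiv ℝ φ z) z ∧ jac z ∈ Ioo 2⁻¹ 2 ∧ z ∈ φ'.source :=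
    ((hφ.eventually (by simp)).mono fun z hz => (hz.differentiableAt one_ne_zero).hasFDerivAt).and
      ((hjac.eventually_mem (isOpen_Ioo.mem_nhds hjacx)).and
        (φ'.open_source.mem_nhds hstrict.mem_toOpenPartialHomeomorph_source))
  obtain ⟨s, hs, hsP⟩ := hev.exists_mem
  refine ⟨s, hs, fun s' hs' hmeas g => ?_⟩
  have hinj : InjOn (fun z => e.symm (φ z)) s' := fun a ha b hb hab =>
    φ'.injOn (hsP a (hs' ha)).2.2 (hsP b (hs' hb)).2.2
      (by simpa [φ', hstrict.toOpenPartialHomeomorph_coe] using e.symm.injective hab)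
  have hderiv : ∀ z ∈ s', HasFDerivWithinAt (fun z => e.symm (φ z)) (J z) s' z := fun z hz =>
    ((e.symm : P →L[ℝ] E).hasFDerivAt.comp z (hsP z (hs' hz)).1).hasFDerivWithinAt
  have hcv := lintegral_image_eq_lintegral_abs_det_fderiv_mul μ hmeas hderiv hinj fun w => g (e w)
  have himage : (fun z => e.symm (φ z)) '' s' = e ⁻¹' (φ '' s') := by
    rw [← e.image_symm_eq_preimage, image_image]
  simp only [e.apply_symm_apply, himage] at hcv
  rw [← e.setLIntegral_comp_lt_top_iff μ ν, hcv]
  refine (setLIntegral_mul_lt_top_iff (a := 2) (b := 2) hmeas ofNat_ne_top ofNat_ne_top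
    fun z hz => ?_).symm
  obtain ⟨hlo, hhi⟩ := (hsP z (hs' hz)).2.1
  refine ⟨?_, hhi.le⟩
  calc 1 = 2 * 2⁻¹ := (ENNReal.mul_inv_cancel two_ne_zero ofNat_ne_top).symm
    _ ≤ 2 * jac z := by gcongr

theorem ContDiffAt.exists_mem_nhds_setLIntegral_comp_lt_top_iff_of_surjective
    {π : E → P} {x : E} (hπ : ContDiffAt ℝ 1 π x) (hsurj : Function.Surjective (fderiv ℝ π x))
    {g : P → ℝ≥0∞} (hg : Measurable g) {t : Set E} (ht : t ∈ 𝓝 x) :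
    ∃ s ∈ 𝓝 x, s ⊆ t ∧ ∃ A ∈ 𝓝 (π x), A ⊆ π '' s ∧
      (∫⁻ z in s, g (π z) ∂μ < ∞ ↔ ∫⁻ y in A, g y ∂ν < ∞) := by
  set f' := fderiv ℝ π x
  have hrange : f'.range = ⊤ := LinearMap.range_eq_top.2 hsurj
  obtain ⟨p, hp⟩ := Submodule.ClosedComplemented.of_finiteDimensional f'.ker
  let Φ : E ≃L[ℝ] P × f'.ker := f'.equivProdOfSurjectiveOfIsCompl p hrange
    (LinearMap.range_eq_of_proj hp) (LinearMap.isCompl_of_proj hp)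
  set φ : E → P × f'.ker := fun z => (π z, p z)
  have hφ : ContDiffAt ℝ 1 φ x := hπ.prodMk p.contDiff.contDiffAt
  have hφ' : fderiv ℝ φ x = Φ :=
    ((hπ.differentiableAt one_ne_zero).hasFDerivAt.prodMk p.hasFDerivAt).fderiv
  let ρ : Measure (f'.ker) := Measure.addHaar
  obtain ⟨s, hs, hcv⟩ := hφ.exists_mem_nhds_setLIntegral_comp_lt_top_iff μ (ν.prod ρ) Φ hφ'
  obtain ⟨s₀, hs₀, hs₀open, hxs₀⟩ := _root_.mem_nhds_iff.1
    (inter_mem (inter_mem hs ht) ((hφ.eventually (by simp)).mono fun z hz => hz.continuousAt))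
  have hφs₀ : ContinuousOn φ s₀ := fun z hz => (hs₀ hz).2.continuousWithinAt
  have hstrict : HasStrictFDerivAt φ (Φ : E →L[ℝ] P × f'.ker) x :=
    hφ' ▸ hφ.hasStrictFDerivAt one_ne_zero
  have himage : φ '' s₀ ∈ 𝓝 (φ x) := by
    rw [← hstrict.map_nhds_eq_of_equiv]
    exact image_mem_map (hs₀open.mem_nhds hxs₀)
  obtain ⟨⟨a, b⟩, ⟨ha, hb⟩, hab⟩ := (nhds_basis_ball.prod_nhds nhds_basis_ball).mem_iff.1 himage
  set s' := s₀ ∩ φ ⁻¹' (ball (π x) a ×ˢ ball (p x) b)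
  have hs'open : IsOpen s' := hφs₀.isOpen_inter_preimage hs₀open (isOpen_ball.prod isOpen_ball)
  have hxs' : x ∈ s' := ⟨hxs₀, mem_ball_self ha, mem_ball_self hb⟩
  have hφs' : φ '' s' = ball (π x) a ×ˢ ball (p x) b := by
    rw [image_inter_preimage, inter_eq_right.2 hab]
  refine ⟨s', hs'open.mem_nhds hxs', fun z hz => (hs₀ hz.1).1.2, ball (π x) a, ball_mem_nhds _ ha,
    fun y hy => ?_, ?_⟩
  · obtain ⟨z, hz, hzy⟩ := hφs'.symm ▸ mk_mem_prod hy (mem_ball_self hb)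
    exact ⟨z, hz, congrArg Prod.fst hzy⟩
  · rw [hcv s' (fun z hz => (hs₀ hz.1).1.1) hs'open.measurableSet (fun q => g q.1), hφs']
    exact setLIntegral_prod_fst_lt_top_iff hg _ (measure_ball_pos _ _ hb).ne'
      measure_ball_lt_top.ne

end HaarMeasure

theorem eLocallyIntegrableOn_image_iff {X Y : Type*} [TopologicalSpace X] [MeasurableSpace X]
    [TopologicalSpace Y] [MeasurableSpace Y] {μ : Measure X} {ν : Measure Y} {π : X → Y}
    {U : Set X} (hU : IsOpen U) (hπ : ContinuousOn π U) {g : Y → ℝ≥0∞}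
    (hloc : ∀ x ∈ U, ∀ t ∈ 𝓝 x, ∃ s ∈ 𝓝 x, s ⊆ t ∧ ∃ A ∈ 𝓝 (π x), A ⊆ π '' s ∧
      (∫⁻ z in s, g (π z) ∂μ < ∞ ↔ ∫⁻ y in A, g y ∂ν < ∞)) :
    ELocallyIntegrableOn g (π '' U) ν ↔ ELocallyIntegrableOn (g ∘ π) U μ := by
  constructor
  · intro h x hx
    obtain ⟨t, ht, hfin⟩ := h (π x) (mem_image_of_mem π hx)
    obtain ⟨o, ho, hot⟩ := mem_nhdsWithin_iff_exists_mem_nhds_inter.1 ht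
    obtain ⟨s, hs, hso, A, -, hAs, hiff⟩ := hloc x hx (π ⁻¹' o ∩ U)
      (inter_mem ((hπ.continuousAt (hU.mem_nhds hx)).preimage_mem_nhds ho) (hU.mem_nhds hx))
    have hAt : A ⊆ t :=
      hAs.trans <| (image_mono hso).trans <| (image_preimage_inter π U o).le.trans hot
    exact ⟨s, mem_nhdsWithin_of_mem_nhds hs, hiff.2 ((lintegral_mono_set hAt).trans_lt hfin)⟩
  · rintro h _ ⟨x, hx, rfl⟩
    obtain ⟨t, ht, hfin⟩ := h x hx
    obtain ⟨s, -, hst, A, hA, -, hiff⟩ := hloc x hx t (hU.nhdsWithin_eq hx ▸ ht)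
    exact ⟨A, mem_nhdsWithin_of_mem_nhds hA, hiff.1 ((lintegral_mono_set hst).trans_lt hfin)⟩

theorem bertini_submersion_iff_general (k m : ℕ)
    (U : Set (Fin k → ℂ)) (hU : IsOpen U)
    (π : (Fin k → ℂ) → (Fin m → ℂ)) (hπ : DifferentiableOn ℂ π U)
    (hsub : ∀ x ∈ U, Function.Surjective (fderiv ℂ π x))
    (g : (Fin m → ℂ) → ENNReal) (hg : Measurable g) :
    IsOpen (π '' U) ∧
      (ELocallyIntegrableOn g (π '' U) volume ↔ ELocallyIntegrableOn (g ∘ π) U volume) := by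
  have hC : ∀ x ∈ U, ContDiffAt ℝ 1 π x := fun x hx =>
    ((hπ.contDiffOn_one_of_isOpen hU).restrict_scalars ℝ).contDiffAt (hU.mem_nhds hx)
  have hD : ∀ x ∈ U, Function.Surjective (fderiv ℝ π x) := fun x hx => by
    rw [(hπ.differentiableAt (hU.mem_nhds hx)).fderiv_restrictScalars ℝ]
    exact hsub x hx
  refine ⟨isOpen_iff_mem_nhds.2 ?_, eLocallyIntegrableOn_image_iff hU hπ.continuousOn
    fun x hx t ht => (hC x hx).exists_mem_nhds_setLIntegral_comp_lt_top_iff_of_surjective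
      volume volume (hD x hx) hg ht⟩
  rintro _ ⟨x, hx, rfl⟩
  rw [← ((hC x hx).hasStrictFDerivAt one_ne_zero).map_nhds_eq_of_surj
    (LinearMap.range_eq_top.2 (hD x hx))]
  exact image_mem_map (hU.mem_nhds hx)

/-- Local coordinate content of `π*𝒥(φ) = 𝒥(π*φ)` for a smooth morphism: if
`π : ℂ^k → ℂ^m` is a holomorphic submersion on the open set `U`, then `V := π(U)` is
open, and `g` is locally integrable on `V` iff `g ∘ π` is locally integrable on `U`. -/
theorem bertini_submersion_iff (k m : ℕ) (hm : 1 ≤ m) (hkm : m ≤ k)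
    (U : Set (Fin k → ℂ)) (hU : IsOpen U)
    (π : (Fin k → ℂ) → (Fin m → ℂ)) (hπ : DifferentiableOn ℂ π U)
    (hsub : ∀ x ∈ U, Function.Surjective (fderiv ℂ π x))
    (g : (Fin m → ℂ) → ENNReal) (hg : Measurable g) :
    IsOpen (π '' U) ∧
      (ELocallyIntegrableOn g (π '' U) volume ↔ ELocallyIntegrableOn (g ∘ π) U volume) :=
  bertini_submersion_iff_general k m U hU π hπ hsub g hg
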